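/- Let K ≥ 1, N ≥ 1 and s be integers with 1 ≤ s ≤ K, and define, for integers 1 ≤ j ≤ K, L_coded(j, s) = ∑_{ℓ = max(j,s)}^{min(j+s, K)} [C(K−j, ℓ−j)·C(j, ℓ−s)/C(K,s)]·(ℓ−j)/(ℓ−1), where C(·,·) is the binomial coefficient. Let r be a real number with 1 ≤ r ≤ K, write r₁ = ⌊r⌋ and r₂ = ⌈r⌉, and let α ∈ [0,1] satisfy r = α·r₁ + (1−α)·r₂. Let a_1, …, a_K be nonnegative real numbers satisfying ∑_{j=1}^K a_j = N and ∑_{j=1}^K j·a_j = r·N. Then ∑_{j=1}^K (a_j/N)·L_coded(j, s) ≥ α·L_coded(r₁, s) + (1−α)·L_coded(r₂, s). -/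

import Mathlib

open Finset

/-- The communication load `L_coded(j,s)` of the CDC scheme in the cascaded framework
(converse form): `∑_{ℓ=max(j,s)}^{min(j+s,K)} [C(K-j,ℓ-j) C(j,ℓ-s)/C(K,s)] (ℓ-j)/(ℓ-1)`. -/
noncomputable def LcodedConv (K s j : ℕ) : ℝ :=
  ∑ ℓ ∈ Finset.Icc (max j s) (min (j + s) K),
    ((Nat.choose (K - j) (ℓ - j) : ℝ) * (Nat.choose j (ℓ - s) : ℝ) /
        (Nat.choose K s : ℝ)) *
      (((ℓ : ℝ) - j) / ((ℓ : ℝ) - 1))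

/-!
Writing `1 / (ℓ - 1) = ∫₀¹ x ^ (ℓ - 2) dx` turns `C(K,s) · L_coded(j,s)` into the integral over
`[0,1]` of `(K - j) x^(j-1) [t^(s-1)] (1 + x t)^(K-j-1) (1 + t)^j`. For fixed `x ∈ [0,1]` the second
difference in `j` of this integrand is `x^(j-2) (1 - x)` times a coefficient of a polynomial with
nonnegative coefficients, so `L_coded(·,s)` is convex on `{1, …, K}`. A convex sequence lies above
the line through its values at `⌊r⌋` and `⌊r⌋ + 1`, and averaging this line against the weights
`a_j / N`, whose mean is `r`, gives the bound.
-/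

open Polynomial

namespace Polynomial

variable {R : Type*}

variable (R) in
def nonnegCoeffs [Semiring R] [PartialOrder R] [IsOrderedRing R] : Subsemiring R[X] where
  carrier := {p | ∀ n, 0 ≤ p.coeff n}
  mul_mem' {p q} hp hq n := by
    rw [coeff_mul]
    exact sum_nonneg fun k _ => mul_nonneg (hp k.1) (hq k.2)
  one_mem' n := by
    rw [coeff_one]
    split_ifs <;> simp
  add_mem' {p q} hp hq n := by
    rw [coeff_add]
    exact add_nonneg (hp n) (hq n)
  zero_mem' n := by simp

section OrderedSemiring

variable [Semiring R] [PartialOrder R] [IsOrderedRing R]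

lemma C_mem_nonnegCoeffs {c : R} (hc : 0 ≤ c) : C c ∈ nonnegCoeffs R := fun n => by
  rw [coeff_C]
  split_ifs
  exacts [hc, le_rfl]

lemma X_mem_nonnegCoeffs : (X : R[X]) ∈ nonnegCoeffs R := fun n => by
  rw [coeff_X]
  split_ifs <;> simp

end OrderedSemiring

lemma coeff_one_add_C_mul_X_pow [CommSemiring R] (x : R) (n k : ℕ) :
    ((1 + C x * X) ^ n).coeff k = n.choose k * x ^ k := by
  have : (1 + C x * X) ^ n = ((1 + X) ^ n).comp (C x * X) := by
    simp only [pow_comp, add_comp, one_comp, X_comp]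
  rw [this, comp_C_mul_X_coeff, coeff_one_add_X_pow]

lemma coeff_one_add_C_mul_X_pow_mul_one_add_X_pow [CommSemiring R] (x : R) (a b m : ℕ) :
    ((1 + C x * X) ^ a * (1 + X) ^ b).coeff m =
      ∑ i ∈ range (m + 1), a.choose i * b.choose (m - i) * x ^ i := by
  rw [coeff_mul, Nat.sum_antidiagonal_eq_sum_range_succ_mk]
  refine sum_congr rfl fun i _ => ?_
  rw [coeff_one_add_C_mul_X_pow, coeff_one_add_X_pow]
  ring

end Polynomial

lemma add_mul_le_of_le_increments {g : ℕ → ℝ} {q : ℝ} {t j : ℕ} (htj : t ≤ j)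
    (h : ∀ u ∈ Ico t j, q ≤ g (u + 1) - g u) : g t + ((j : ℝ) - t) * q ≤ g j := by
  have hsum := card_nsmul_le_sum _ _ _ h
  rw [sum_Ico_sub g htj, Nat.card_Ico, nsmul_eq_mul, Nat.cast_sub htj] at hsum
  linarith

lemma add_mul_le_of_increments_le {g : ℕ → ℝ} {q : ℝ} {t j : ℕ} (hjt : j ≤ t)
    (h : ∀ u ∈ Ico j t, g (u + 1) - g u ≤ q) : g t + ((j : ℝ) - t) * q ≤ g j := by
  have hsum := sum_le_card_nsmul _ _ _ h
  rw [sum_Ico_sub g hjt, Nat.card_Ico, nsmul_eq_mul, Nat.cast_sub hjt] at hsum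
  linarith

lemma add_mul_le_of_monotoneOn_increment {g : ℕ → ℝ} {K t : ℕ} (ht : t ∈ Set.Icc 1 K)
    (hg : MonotoneOn (fun u => g (u + 1) - g u) (Set.Ico 1 K)) {j : ℕ} (hj : j ∈ Set.Icc 1 K) :
    g t + ((j : ℝ) - t) * (g (min t (K - 1) + 1) - g (min t (K - 1))) ≤ g j := by
  obtain ⟨ht1, htK⟩ := ht
  obtain ⟨hj1, hjK⟩ := hj
  obtain htj | hjt := le_total t j
  · exact add_mul_le_of_le_increments htj fun u hu => by
      rw [mem_Ico] at hu
      exact hg ⟨by omega, by omega⟩ ⟨by omega, by omega⟩ (by omega)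
  · exact add_mul_le_of_increments_le hjt fun u hu => by
      rw [mem_Ico] at hu
      exact hg ⟨by omega, by omega⟩ ⟨by omega, by omega⟩ (by omega)

lemma add_mul_le_weighted_sum {ι : Type*} {S : Finset ι} {a x f : ι → ℝ} {N r y t q : ℝ}
    (hN : 0 < N) (ha : ∀ i ∈ S, 0 ≤ a i) (hsum : ∑ i ∈ S, a i = N)
    (hx : ∑ i ∈ S, x i * a i = r * N) (hf : ∀ i ∈ S, y + (x i - t) * q ≤ f i) :
    y + (r - t) * q ≤ ∑ i ∈ S, a i / N * f i := by
  have hmean : ∑ i ∈ S, a i / N * (y + (x i - t) * q) = y + (r - t) * q :=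
    calc ∑ i ∈ S, a i / N * (y + (x i - t) * q)
        _ = ((y - t * q) * ∑ i ∈ S, a i + q * ∑ i ∈ S, x i * a i) / N := by
          rw [mul_sum, mul_sum, ← sum_add_distrib, sum_div]
          exact sum_congr rfl fun i _ => by ring
        _ = y + (r - t) * q := by
          rw [hsum, hx]
          field_simp
          ring
  rw [← hmean]
  exact sum_le_sum fun i hi => mul_le_mul_of_nonneg_left (hf i hi) (div_nonneg (ha i hi) hN.le)

theorem interpolation_le_sum_div_mul_of_monotoneOn_increment (g : ℕ → ℝ) {K N : ℕ} (hN : 0 < N)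
    (hg : MonotoneOn (fun u => g (u + 1) - g u) (Set.Ico 1 K)) {r α : ℝ} (hr1 : 1 ≤ r)
    (hrK : r ≤ K) (hconv : r = α * (⌊r⌋ : ℝ) + (1 - α) * (⌈r⌉ : ℝ)) {a : ℕ → ℝ}
    (ha : ∀ j ∈ Icc 1 K, 0 ≤ a j) (hsum : ∑ j ∈ Icc 1 K, a j = N)
    (hrsum : ∑ j ∈ Icc 1 K, (j : ℝ) * a j = r * N) :
    α * g ⌊r⌋.toNat + (1 - α) * g ⌈r⌉.toNat ≤ ∑ j ∈ Icc 1 K, a j / N * g j := by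
  rw [← natCast_floor_eq_intCast_floor (by linarith),
    ← natCast_ceil_eq_intCast_ceil (by linarith)] at hconv
  rw [Int.floor_toNat, Int.ceil_toNat]
  set t := ⌊r⌋₊
  have ht : t ∈ Set.Icc 1 K := ⟨Nat.one_le_floor_iff _ |>.2 hr1, Nat.floor_le_of_le hrK⟩
  refine le_of_eq_of_le ?_ (add_mul_le_weighted_sum (by positivity) ha hsum hrsum
    fun j hj => add_mul_le_of_monotoneOn_increment ht hg (mem_Icc.1 hj))
  obtain hceil | hceil : ⌈r⌉₊ = t ∨ ⌈r⌉₊ = t + 1 := by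
    have := Nat.floor_le_ceil r
    have := Nat.ceil_le_floor_add_one r
    omega
  · rw [hceil] at hconv ⊢
    linear_combination (g (min t (K - 1)) - g (min t (K - 1) + 1)) * hconv
  · have htK : t + 1 ≤ K := hceil ▸ Nat.ceil_le.2 hrK
    rw [hceil] at hconv
    rw [hceil, min_eq_left (by omega : t ≤ K - 1)]
    push_cast at hconv
    linear_combination (g t - g (t + 1)) * hconv

/-- `C(K,s) · LcodedConv K s j = ∫₀¹ codedLoadDensity K s j`: the term `ℓ = j + 1 + i` of
`LcodedConv` becomes `(K - j) C(K-j-1, i) C(j, s-1-i) ∫₀¹ x ^ (ℓ - 2) dx`. -/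
noncomputable def codedLoadDensity (K s j : ℕ) (x : ℝ) : ℝ :=
  (K - j : ℝ) * x ^ (j - 1) * ((1 + C x * X) ^ (K - j - 1) * (1 + X) ^ j).coeff (s - 1)

lemma codedLoadDensity_eq_sum {K s j : ℕ} (hs : 1 ≤ s) (x : ℝ) :
    codedLoadDensity K s j x = ∑ i ∈ range s,
      (K - j : ℝ) * (K - j - 1).choose i * j.choose (s - 1 - i) * x ^ (j - 1 + i) := by
  rw [codedLoadDensity, coeff_one_add_C_mul_X_pow_mul_one_add_X_pow, Nat.sub_add_cancel hs,
    mul_sum]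
  refine sum_congr rfl fun i _ => ?_
  ring

lemma continuous_codedLoadDensity {K s j : ℕ} (hs : 1 ≤ s) :
    Continuous (codedLoadDensity K s j) := by
  simp_rw [funext (codedLoadDensity_eq_sum hs)]
  fun_prop

lemma integral_codedLoadDensity {K s j : ℕ} (hs : 1 ≤ s) (hj : 1 ≤ j) :
    ∫ x in (0 : ℝ)..1, codedLoadDensity K s j x =
      ∑ i ∈ range s, (K - j : ℝ) * (K - j - 1).choose i * j.choose (s - 1 - i) / (j + i) := by
  simp_rw [codedLoadDensity_eq_sum hs]
  rw [intervalIntegral.integral_finsetSum fun i _ =>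
    Continuous.intervalIntegrable (by fun_prop) 0 1]
  refine sum_congr rfl fun i _ => ?_
  rw [intervalIntegral.integral_const_mul, integral_pow]
  push_cast [Nat.cast_sub hj]
  ring

/-- With `a = 1 + x X` and `b = x (1 + X)`, so that `a - b = 1 - x`, this is the second difference
in `j` of `codedLoadDensity`. At `m = 0` the truncated power `a ^ (m - 1)` only occurs with the
factor `m`. -/
lemma pow_second_difference {R : Type*} [CommRing R] (a b : R) (m : ℕ) :
    (m + 2) * a ^ (m + 1) + m * b ^ 2 * a ^ (m - 1) - 2 * (m + 1) * b * a ^ m =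
      (a - b) * (m * (a - b) * a ^ (m - 1) + 2 * a ^ m) := by
  cases m with
  | zero => simp; ring
  | succ m => simp only [Nat.add_sub_cancel, Nat.cast_succ]; ring

lemma two_mul_codedLoadDensity_le_add {K s v : ℕ} (hv : 1 ≤ v) (hvK : v + 2 ≤ K) {x : ℝ}
    (hx₀ : 0 ≤ x) (hx₁ : x ≤ 1) :
    2 * codedLoadDensity K s (v + 1) x ≤
      codedLoadDensity K s v x + codedLoadDensity K s (v + 2) x := by
  obtain ⟨m, rfl⟩ : ∃ m, K = v + 2 + m := ⟨K - (v + 2), by omega⟩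
  obtain ⟨e, rfl⟩ : ∃ e, v = e + 1 := ⟨v - 1, by omega⟩
  simp only [codedLoadDensity, show e + 1 + 2 + m - (e + 1) - 1 = m + 1 by omega,
    show e + 1 + 2 + m - (e + 1 + 1) - 1 = m by omega,
    show e + 1 + 2 + m - (e + 1 + 2) - 1 = m - 1 by omega, Nat.add_sub_cancel]
  push_cast
  set A : ℝ[X] := 1 + C x * X
  set B : ℝ[X] := 1 + X
  set Q := B ^ (e + 1) * (m * C (1 - x) * A ^ (m - 1) + 2 * A ^ m)
  have hAB : A - C x * B = C (1 - x) := by simp only [A, B, map_sub, map_one]; ring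
  have hid := pow_second_difference A (C x * B) m
  rw [hAB] at hid
  have hpoly : C ((m : ℝ) + 2) * (A ^ (m + 1) * B ^ (e + 1))
      + C ((m : ℝ) * x ^ 2) * (A ^ (m - 1) * B ^ (e + 3))
      - C (2 * ((m : ℝ) + 1) * x) * (A ^ m * B ^ (e + 2)) = C (1 - x) * Q := by
    simp only [Q, map_add, map_mul, map_natCast, map_ofNat, map_pow, map_one]
    linear_combination B ^ (e + 1) * hid
  have hcoeff := congrArg (coeff · (s - 1)) hpoly
  simp only [coeff_sub, coeff_add, coeff_C_mul] at hcoeff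
  have hA : A ∈ nonnegCoeffs ℝ :=
    add_mem (one_mem _) (mul_mem (C_mem_nonnegCoeffs hx₀) X_mem_nonnegCoeffs)
  have hB : B ∈ nonnegCoeffs ℝ := add_mem (one_mem _) X_mem_nonnegCoeffs
  have hQ : Q ∈ nonnegCoeffs ℝ :=
    mul_mem (pow_mem hB _) (add_mem
      (mul_mem (mul_mem (natCast_mem _ m) (C_mem_nonnegCoeffs (sub_nonneg.2 hx₁))) (pow_mem hA _))
      (mul_mem (ofNat_mem _ 2) (pow_mem hA _)))
  have hdiff := mul_nonneg (pow_nonneg hx₀ e) (mul_nonneg (sub_nonneg.2 hx₁) (hQ (s - 1)))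
  rw [← hcoeff] at hdiff
  linear_combination hdiff

lemma Nat.mul_choose_sub_one (n k : ℕ) : n * (n - 1).choose k = n.choose (k + 1) * (k + 1) := by
  cases n with
  | zero => simp
  | succ n => exact Nat.add_one_mul_choose_eq n k

lemma LcodedConv_eq_sum_range {K s j : ℕ} (hjK : j ≤ K) :
    LcodedConv K s j = (K.choose s : ℝ)⁻¹ *
      ∑ i ∈ range s, (K - j : ℝ) * (K - j - 1).choose i * j.choose (s - 1 - i) / (j + i) := by
  set T : ℕ → ℝ := fun i =>
    (K.choose s : ℝ)⁻¹ * ((K - j : ℝ) * (K - j - 1).choose i * j.choose (s - 1 - i) / (j + i))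
  have hT : ∀ i, i < s → s ≤ j + 1 + i →
      T i = (K - j).choose (j + 1 + i - j) * j.choose (j + 1 + i - s) / K.choose s *
          ((((j + 1 + i : ℕ) : ℝ) - j) / ((j + 1 + i : ℕ) - 1)) := by
    intro i his hsi
    have hsymm : j.choose (j + 1 + i - s) = j.choose (s - 1 - i) :=
      Nat.choose_symm_of_eq_add (by omega)
    have hpascal : (K - j : ℝ) * (K - j - 1).choose i = (K - j).choose (i + 1) * (i + 1) := by
      exact_mod_cast Nat.mul_choose_sub_one (K - j) i
    rw [hsymm, show j + 1 + i - j = i + 1 by omega]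
    simp only [T, hpascal]
    push_cast
    ring
  have hT_ne : ∀ i, T i ≠ 0 → s ≤ j + 1 + i ∧ j + 1 + i ≤ K := by
    intro i hne
    simp only [T] at hne
    constructor <;> by_contra h
    · rw [Nat.choose_eq_zero_of_lt (by omega : j < s - 1 - i)] at hne
      simp at hne
    · obtain hj | hj := hjK.eq_or_lt
      · simp [hj] at hne
      · rw [Nat.choose_eq_zero_of_lt (by omega : K - j - 1 < i)] at hne
        simp at hne
  rw [LcodedConv, mul_sum]
  symm
  refine sum_bij_ne_zero (fun i _ _ => j + 1 + i) (fun i hi hne => ?_)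
    (fun _ _ _ _ _ _ h => by omega) (fun ℓ hℓ hne => ?_)
    (fun i hi hne => hT i (mem_range.1 hi) (hT_ne i hne).1)
  · have := hT_ne i hne
    simp only [mem_Icc, mem_range] at hi ⊢
    omega
  · rw [mem_Icc, max_le_iff] at hℓ
    have hℓj : ℓ ≠ j := by rintro rfl; simp at hne
    obtain ⟨i, rfl⟩ : ∃ i, ℓ = j + 1 + i := ⟨ℓ - j - 1, by omega⟩
    refine ⟨i, mem_range.2 (by omega), ?_, rfl⟩
    change T i ≠ 0
    rwa [hT i (by omega) hℓ.1.2]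

lemma LcodedConv_eq_integral {K s j : ℕ} (hs : 1 ≤ s) (hj : 1 ≤ j) (hjK : j ≤ K) :
    LcodedConv K s j = (K.choose s : ℝ)⁻¹ * ∫ x in (0 : ℝ)..1, codedLoadDensity K s j x := by
  rw [LcodedConv_eq_sum_range hjK, integral_codedLoadDensity hs hj]

lemma LcodedConv_increment_le {K s v : ℕ} (hs : 1 ≤ s) (hv : 1 ≤ v) (hvK : v + 2 ≤ K) :
    LcodedConv K s (v + 1) - LcodedConv K s v ≤
      LcodedConv K s (v + 2) - LcodedConv K s (v + 1) := by
  have hint : ∀ j, IntervalIntegrable (codedLoadDensity K s j) MeasureTheory.volume 0 1 :=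
    fun j => (continuous_codedLoadDensity hs).intervalIntegrable 0 1
  have hconvex : 2 * ∫ x in (0 : ℝ)..1, codedLoadDensity K s (v + 1) x ≤
      (∫ x in (0 : ℝ)..1, codedLoadDensity K s v x) +
        ∫ x in (0 : ℝ)..1, codedLoadDensity K s (v + 2) x := by
    rw [← intervalIntegral.integral_const_mul, ← intervalIntegral.integral_add (hint _) (hint _)]
    exact intervalIntegral.integral_mono_on zero_le_one ((hint _).const_mul 2)
      ((hint _).add (hint _)) fun x hx => two_mul_codedLoadDensity_le_add hv hvK hx.1 hx.2
  rw [LcodedConv_eq_integral hs (by omega) (by omega), LcodedConv_eq_integral hs hv (by omega),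
    LcodedConv_eq_integral hs (by omega) hvK]
  have := mul_le_mul_of_nonneg_left hconvex (by positivity : (0 : ℝ) ≤ (K.choose s : ℝ)⁻¹)
  linarith

lemma monotoneOn_LcodedConv_increment {K s : ℕ} (hs : 1 ≤ s) :
    MonotoneOn (fun u => LcodedConv K s (u + 1) - LcodedConv K s u) (Set.Ico 1 K) :=
  monotoneOn_of_le_succ Set.ordConnected_Ico fun u _ hu hsu => by
    rw [Order.succ_eq_add_one] at hsu ⊢
    exact LcodedConv_increment_le hs hu.1 (by have := hsu.2; omega)

theorem cdc_cascaded_converse_envelope_general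
    (K N s : ℕ) (hN : 1 ≤ N) (hs1 : 1 ≤ s)
    (r : ℝ) (hr1 : 1 ≤ r) (hrK : r ≤ K)
    (α : ℝ)
    (hconv : r = α * (⌊r⌋ : ℝ) + (1 - α) * (⌈r⌉ : ℝ))
    (a : ℕ → ℝ) (ha : ∀ j ∈ Finset.Icc 1 K, 0 ≤ a j)
    (hsum : ∑ j ∈ Finset.Icc 1 K, a j = N)
    (hrsum : ∑ j ∈ Finset.Icc 1 K, (j : ℝ) * a j = r * N) :
    ∑ j ∈ Finset.Icc 1 K, (a j / N) * LcodedConv K s j ≥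
      α * LcodedConv K s ⌊r⌋.toNat + (1 - α) * LcodedConv K s ⌈r⌉.toNat :=
  interpolation_le_sum_div_mul_of_monotoneOn_increment (LcodedConv K s) hN
    (monotoneOn_LcodedConv_increment hs1) hr1 hrK hconv ha hsum hrsum

/-- Let `K, N ≥ 1` and `1 ≤ s ≤ K` be integers, let `r` be real with
`1 ≤ r ≤ K`, `r₁ = ⌊r⌋`, `r₂ = ⌈r⌉`, and `α ∈ [0,1]` with `r = α r₁ + (1-α) r₂`.
If `a 1, …, a K` are nonnegative with `∑ a j = N` and `∑ j a j = r N`, then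
`∑ (a j / N) L_coded(j,s) ≥ α L_coded(r₁,s) + (1-α) L_coded(r₂,s)`. -/
theorem cdc_cascaded_converse_envelope
    (K N s : ℕ) (hK : 1 ≤ K) (hN : 1 ≤ N) (hs1 : 1 ≤ s) (hsK : s ≤ K)
    (r : ℝ) (hr1 : 1 ≤ r) (hrK : r ≤ K)
    (α : ℝ) (hα0 : 0 ≤ α) (hα1 : α ≤ 1)
    (hconv : r = α * (⌊r⌋ : ℝ) + (1 - α) * (⌈r⌉ : ℝ))
    (a : ℕ → ℝ) (ha : ∀ j ∈ Finset.Icc 1 K, 0 ≤ a j)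
    (hsum : ∑ j ∈ Finset.Icc 1 K, a j = N)
    (hrsum : ∑ j ∈ Finset.Icc 1 K, (j : ℝ) * a j = r * N) :
    ∑ j ∈ Finset.Icc 1 K, (a j / N) * LcodedConv K s j ≥
      α * LcodedConv K s ⌊r⌋.toNat + (1 - α) * LcodedConv K s ⌈r⌉.toNat :=
  cdc_cascaded_converse_envelope_general K N s hN hs1 r hr1 hrK α hconv a ha hsum hrsum
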